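/- Let X be a graph with subgraphs G and H such that G ∪ H = X. Suppose that G ∩ H is convex in X and that H projects to G ∩ H. Then the magnitudes satisfy |X|(q) = |G|(q) + |H|(q) − |G ∩ H|(q) in ℚ(q). -/

import Mathlib

open scoped Classical in
/-- `q ^ d` for an extended natural number `d`, with the convention `q ^ ∞ = 0`. -/
noncomputable def qExp (d : ℕ∞) : RatFunc ℚ :=
  if d = ⊤ then 0 else RatFunc.X ^ d.toNat

/-- The matrix `Z_G(q)` whose `(x, y)` entry is `q ^ d(x, y)`. -/
noncomputable def magMatrix {V : Type*} [Fintype V] (G : SimpleGraph V) :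
    Matrix V V (RatFunc ℚ) :=
  Matrix.of fun x y => qExp (G.edist x y)

/-- The magnitude of a graph: the sum of all entries of `Z_G(q)⁻¹`. -/
noncomputable def magnitude {V : Type*} [Fintype V] [DecidableEq V] (G : SimpleGraph V) :
    RatFunc ℚ :=
  ∑ x, ∑ y, (magMatrix G)⁻¹ x y

/-- The weighting of a graph: `w_G x` is the `x`-th row sum of `Z_G(q)⁻¹`. -/
noncomputable def weighting {V : Type*} [Fintype V] [DecidableEq V] (G : SimpleGraph V)
    (x : V) : RatFunc ℚ :=
  ∑ y, (magMatrix G)⁻¹ x y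
/-- A subgraph `U` of `X` is convex in `X` if the shortest-path distance in `U` agrees with
the shortest-path distance in `X` between vertices of `U`. -/
def ConvexIn {V : Type*} {X : SimpleGraph V} (U : X.Subgraph) : Prop :=
  ∀ (u u' : V) (hu : u ∈ U.verts) (hu' : u' ∈ U.verts),
    U.coe.edist ⟨u, hu⟩ ⟨u', hu'⟩ = X.edist u u'

open scoped Classical

lemma qExp_top : qExp ⊤ = 0 := if_pos rfl

lemma qExp_zero : qExp 0 = 1 := by simp [qExp]

lemma qExp_add (a b : ℕ∞) : qExp (a + b) = qExp a * qExp b := by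
  rcases eq_or_ne a ⊤ with ha | ha
  · simp [ha, qExp_top, qExp, top_add]
  rcases eq_or_ne b ⊤ with hb | hb
  · simp [hb, qExp_top, qExp, add_top]
  have : a + b ≠ ⊤ := by
    exact WithTop.add_ne_top.mpr ⟨ha, hb⟩
  rw [qExp, qExp, qExp, if_neg this, if_neg ha, if_neg hb, ENat.toNat_add ha hb, pow_add]

lemma edist_hom_le {α β : Type*} {A : SimpleGraph α} {B : SimpleGraph β} (f : A →g B)
    (u v : α) : B.edist (f u) (f v) ≤ A.edist u v := by
  rcases eq_or_ne (A.edist u v) ⊤ with h | h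
  · simp [h]
  obtain ⟨p, hp⟩ := SimpleGraph.exists_walk_of_edist_ne_top h
  calc B.edist (f u) (f v) ≤ (p.map f).length := SimpleGraph.edist_le _
  _ = A.edist u v := by rw [SimpleGraph.Walk.length_map, hp]

-- det nonzero
noncomputable def polyMat {V : Type*} [Fintype V] (G : SimpleGraph V) :
    Matrix V V (Polynomial ℚ) :=
  Matrix.of fun x y => if G.edist x y = ⊤ then 0 else Polynomial.X ^ (G.edist x y).toNat

lemma magMatrix_eq_map {V : Type*} [Fintype V] (G : SimpleGraph V) :
    magMatrix G = (polyMat G).map (algebraMap (Polynomial ℚ) (RatFunc ℚ)) := by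
  ext x y
  simp only [magMatrix, polyMat, Matrix.map_apply, Matrix.of_apply, qExp]
  split
  · simp
  · simp [map_pow, RatFunc.algebraMap_X]

lemma polyMat_det_ne_zero {V : Type*} [Fintype V] [DecidableEq V] (G : SimpleGraph V) :
    (polyMat G).det ≠ 0 := by
  intro h
  have h0 : (Polynomial.evalRingHom (0 : ℚ)) (polyMat G).det = 0 := by rw [h]; simp
  rw [RingHom.map_det, RingHom.mapMatrix_apply] at h0
  have h1 : (polyMat G).map (Polynomial.evalRingHom (0 : ℚ)) = 1 := by
    ext x y
    by_cases hxy : x = y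
    · subst hxy
      simp [polyMat, SimpleGraph.edist_self, Matrix.one_apply]
    · have hne : G.edist x y ≠ 0 := fun h0 => hxy (SimpleGraph.edist_eq_zero_iff.mp h0)
      simp only [polyMat, Matrix.map_apply, Matrix.of_apply, Matrix.one_apply, if_neg hxy]
      split
      · simp
      · rename_i htop
        have : (G.edist x y).toNat ≠ 0 := by
          simp [ENat.toNat_eq_zero, hne, htop]
        simp [Polynomial.eval_pow, zero_pow this]
  rw [h1, Matrix.det_one] at h0
  exact one_ne_zero h0

lemma magMatrix_det_ne_zero {V : Type*} [Fintype V] [DecidableEq V] (G : SimpleGraph V) :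
    (magMatrix G).det ≠ 0 := by
  rw [magMatrix_eq_map, ← RingHom.mapMatrix_apply, ← RingHom.map_det]
  exact RatFunc.algebraMap_ne_zero (polyMat_det_ne_zero G)

section GraphLemmas

variable {V : Type*} {X : SimpleGraph V} {G H : X.Subgraph}

lemma edist_X_le (S : X.Subgraph) (u v : ↥S.verts) : X.edist ↑u ↑v ≤ S.coe.edist u v :=
  edist_hom_le S.hom u v

lemma edist_adj {A : Type*} {B : SimpleGraph A} {u v : A} (h : B.Adj u v) :
    B.edist u v ≤ 1 := by
  have := SimpleGraph.edist_le h.toWalk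
  simpa using this

lemma crossing (hadj : ∀ u v : V, X.Adj u v → G.Adj u v ∨ H.Adj u v) :
    ∀ {a b : V} (W : X.Walk a b), a ∉ H.verts → b ∈ H.verts →
    ∃ (haG : a ∈ G.verts) (z : V) (hzG : z ∈ G.verts) (hzH : z ∈ H.verts) (W₂ : X.Walk z b),
      G.coe.edist ⟨a, haG⟩ ⟨z, hzG⟩ + W₂.length ≤ W.length := by
  intro a b W
  induction W with
  | nil => intro ha hb; exact absurd hb ha
  | @cons u v w h W' ih =>
    intro ha hb
    have hGadj : G.Adj u v := by
      rcases hadj _ _ h with h' | h'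
      · exact h'
      · exact absurd h'.fst_mem ha
    have huG : u ∈ G.verts := hGadj.fst_mem
    have hvG : v ∈ G.verts := hGadj.snd_mem
    have hcoe : G.coe.Adj ⟨u, huG⟩ ⟨v, hvG⟩ := hGadj
    by_cases hvH : v ∈ H.verts
    · refine ⟨huG, v, hvG, hvH, W', ?_⟩
      calc G.coe.edist ⟨u, huG⟩ ⟨v, hvG⟩ + (W'.length : ℕ∞)
          ≤ 1 + W'.length := add_le_add_left (edist_adj hcoe) _
        _ = ((W'.cons h).length : ℕ∞) := by
            rw [SimpleGraph.Walk.length_cons]; push_cast; ring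
    · obtain ⟨hvG', z, hzG, hzH, W₂, hW₂⟩ := ih hvH hb
      refine ⟨huG, z, hzG, hzH, W₂, ?_⟩
      calc G.coe.edist ⟨u, huG⟩ ⟨z, hzG⟩ + (W₂.length : ℕ∞)
          ≤ (G.coe.edist ⟨u, huG⟩ ⟨v, hvG⟩ + G.coe.edist ⟨v, hvG⟩ ⟨z, hzG⟩) + W₂.length := by
            exact add_le_add_left (SimpleGraph.edist_triangle) _
        _ ≤ (1 + G.coe.edist ⟨v, hvG⟩ ⟨z, hzG⟩) + W₂.length := by
            exact add_le_add_left (add_le_add_left (edist_adj hcoe) _) _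
        _ = 1 + (G.coe.edist ⟨v, hvG⟩ ⟨z, hzG⟩ + W₂.length) := by ring
        _ ≤ 1 + ((W'.length : ℕ∞)) := by
            exact add_le_add_right hW₂ _
        _ = ((W'.cons h).length : ℕ∞) := by
            rw [SimpleGraph.Walk.length_cons]; push_cast; ring

lemma sub_edist_eq (hadj : ∀ u v : V, X.Adj u v → G.Adj u v ∨ H.Adj u v)
    (hkey : ∀ (u u' : V) (_ : u ∈ G.verts) (huH : u ∈ H.verts) (_ : u' ∈ G.verts)
      (huH' : u' ∈ H.verts), H.coe.edist ⟨u, huH⟩ ⟨u', huH'⟩ ≤ X.edist u u') :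
    ∀ (u v : ↥H.verts), H.coe.edist u v = X.edist ↑u ↑v := by
  have main : ∀ n : ℕ, ∀ (a b : V) (ha : a ∈ H.verts) (hb : b ∈ H.verts) (W : X.Walk a b),
      W.length ≤ n → H.coe.edist ⟨a, ha⟩ ⟨b, hb⟩ ≤ W.length := by
    intro n
    induction n using Nat.strong_induction_on with
    | _ n ihn =>
      intro a b ha hb W hW
      cases W with
      | nil =>
          have : H.coe.edist ⟨a, ha⟩ ⟨a, hb⟩ = 0 := SimpleGraph.edist_eq_zero_iff.mpr rfl
          simp [this]
      | @cons _ c _ h W' =>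
        have hlen : W'.length < n := by
          rw [SimpleGraph.Walk.length_cons] at hW; omega
        rcases hadj _ _ h with hGadj | hHadj
        · have haG : a ∈ G.verts := hGadj.fst_mem
          have hcG : c ∈ G.verts := hGadj.snd_mem
          by_cases hcH : c ∈ H.verts
          · have h1 : H.coe.edist ⟨a, ha⟩ ⟨c, hcH⟩ ≤ 1 :=
              (hkey a c haG ha hcG hcH).trans (edist_adj h)
            have h2 := ihn W'.length hlen c b hcH hb W' le_rfl
            calc H.coe.edist ⟨a, ha⟩ ⟨b, hb⟩
                ≤ H.coe.edist ⟨a, ha⟩ ⟨c, hcH⟩ + H.coe.edist ⟨c, hcH⟩ ⟨b, hb⟩ :=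
                  SimpleGraph.edist_triangle
              _ ≤ 1 + W'.length := add_le_add h1 h2
              _ = ((W'.cons h).length : ℕ∞) := by
                  rw [SimpleGraph.Walk.length_cons]; push_cast; ring
          · obtain ⟨hcG', z, hzG, hzH, W₂, hW₂⟩ := crossing hadj W' hcH hb
            have hcz : (1 : ℕ∞) ≤ G.coe.edist ⟨c, hcG'⟩ ⟨z, hzG⟩ := by
              rw [Order.one_le_iff_pos]
              apply SimpleGraph.edist_pos_of_ne
              intro hzc
              apply hcH
              have : c = z := congrArg Subtype.val hzc
              rw [this]; exact hzH
            have hW₂lt : W₂.length < W'.length := by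
              have h1 : ((W₂.length + 1 : ℕ) : ℕ∞) ≤ (W'.length : ℕ∞) := by
                push_cast
                calc (W₂.length : ℕ∞) + 1 = 1 + W₂.length := by ring
                  _ ≤ G.coe.edist ⟨c, hcG'⟩ ⟨z, hzG⟩ + W₂.length := add_le_add_left hcz _
                  _ ≤ W'.length := hW₂
              have := Nat.cast_le.mp h1
              omega
            have hzb := ihn W₂.length (hW₂lt.trans hlen : W₂.length < n) z b hzH hb W₂ le_rfl
            calc H.coe.edist ⟨a, ha⟩ ⟨b, hb⟩
                ≤ H.coe.edist ⟨a, ha⟩ ⟨z, hzH⟩ + H.coe.edist ⟨z, hzH⟩ ⟨b, hb⟩ :=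
                  SimpleGraph.edist_triangle
              _ ≤ X.edist a z + W₂.length :=
                  add_le_add (hkey a z haG ha hzG hzH) hzb
              _ ≤ (X.edist a c + X.edist c z) + W₂.length :=
                  add_le_add_left SimpleGraph.edist_triangle _
              _ ≤ (1 + G.coe.edist ⟨c, hcG'⟩ ⟨z, hzG⟩) + W₂.length :=
                  add_le_add_left (add_le_add (edist_adj h) (edist_X_le G _ _)) _
              _ = 1 + (G.coe.edist ⟨c, hcG'⟩ ⟨z, hzG⟩ + W₂.length) := by ring
              _ ≤ 1 + (W'.length : ℕ∞) := add_le_add_right hW₂ _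
              _ = ((W'.cons h).length : ℕ∞) := by
                  rw [SimpleGraph.Walk.length_cons]; push_cast; ring
        · have hcH : c ∈ H.verts := hHadj.snd_mem
          have h1 : H.coe.edist ⟨a, ha⟩ ⟨c, hcH⟩ ≤ 1 := by
            have hcoe : H.coe.Adj ⟨a, ha⟩ ⟨c, hcH⟩ := hHadj
            exact edist_adj hcoe
          have h2 := ihn W'.length hlen c b hcH hb W' le_rfl
          calc H.coe.edist ⟨a, ha⟩ ⟨b, hb⟩
              ≤ H.coe.edist ⟨a, ha⟩ ⟨c, hcH⟩ + H.coe.edist ⟨c, hcH⟩ ⟨b, hb⟩ :=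
                SimpleGraph.edist_triangle
            _ ≤ 1 + W'.length := add_le_add h1 h2
            _ = ((W'.cons h).length : ℕ∞) := by
                rw [SimpleGraph.Walk.length_cons]; push_cast; ring
  intro u v
  refine le_antisymm ?_ (edist_X_le H u v)
  rcases eq_or_ne (X.edist ↑u ↑v) ⊤ with htop | htop
  · rw [htop]; exact le_top
  · obtain ⟨p, hp⟩ := SimpleGraph.exists_walk_of_edist_ne_top htop
    have := main p.length ↑u ↑v u.2 v.2 p le_rfl
    rw [hp] at this
    simpa using this

end GraphLemmas

section Main

variable {V : Type*} {X : SimpleGraph V} {G H : X.Subgraph}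

lemma edist_le_of_le {S T : X.Subgraph} (hle : S ≤ T) (u v : ↥S.verts)
    (hu : ↑u ∈ T.verts) (hv : ↑v ∈ T.verts) :
    T.coe.edist ⟨↑u, hu⟩ ⟨↑v, hv⟩ ≤ S.coe.edist u v :=
  edist_hom_le (SimpleGraph.Subgraph.inclusion hle) u v

lemma mem_inf_verts {v : V} (h1 : v ∈ G.verts) (h2 : v ∈ H.verts) :
    v ∈ (G ⊓ H).verts := ⟨h1, h2⟩

lemma convH (hadj : ∀ u v : V, X.Adj u v → G.Adj u v ∨ H.Adj u v)
    (hconv : ConvexIn (G ⊓ H)) :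
    ∀ u v : ↥H.verts, H.coe.edist u v = X.edist ↑u ↑v := by
  apply sub_edist_eq hadj
  intro u u' huG huH huG' huH'
  have h1 := edist_le_of_le (inf_le_right : G ⊓ H ≤ H)
    ⟨u, mem_inf_verts huG huH⟩ ⟨u', mem_inf_verts huG' huH'⟩ huH huH'
  rw [hconv u u' (mem_inf_verts huG huH) (mem_inf_verts huG' huH')] at h1
  exact h1

lemma convG (hadj : ∀ u v : V, X.Adj u v → G.Adj u v ∨ H.Adj u v)
    (hconv : ConvexIn (G ⊓ H)) :
    ∀ u v : ↥G.verts, G.coe.edist u v = X.edist ↑u ↑v := by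
  apply sub_edist_eq (G := H) (H := G) (fun u v huv => (hadj u v huv).symm)
  intro u u' huH huG huH' huG'
  have h1 := edist_le_of_le (inf_le_left : G ⊓ H ≤ G)
    ⟨u, mem_inf_verts huG huH⟩ ⟨u', mem_inf_verts huG' huH'⟩ huG huG'
  rw [hconv u u' (mem_inf_verts huG huH) (mem_inf_verts huG' huH')] at h1
  exact h1

lemma dist_split (hadj : ∀ u v : V, X.Adj u v → G.Adj u v ∨ H.Adj u v)
    {x : V} (hx : x ∈ G.verts) (y p : ↥H.verts) (hpG : (p : V) ∈ G.verts)
    (hp : ∀ u : ↥H.verts, (u : V) ∈ G.verts →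
      H.coe.edist y u = H.coe.edist y p + H.coe.edist p u) :
    X.edist x ↑y = X.edist x ↑p + H.coe.edist p y := by
  apply le_antisymm
  · calc X.edist x ↑y ≤ X.edist x ↑p + X.edist ↑p ↑y := SimpleGraph.edist_triangle
      _ ≤ X.edist x ↑p + H.coe.edist p y := add_le_add_right (edist_X_le H p y) _
  · rcases eq_or_ne (X.edist x ↑y) ⊤ with htop | htop
    · rw [htop]; exact le_top
    by_cases hyG : (y : V) ∈ G.verts
    · have h0 := hp y hyG
      rw [SimpleGraph.edist_self] at h0
      obtain ⟨h1, h2⟩ := add_eq_zero.mp h0.symm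
      have hpy : p = y := SimpleGraph.edist_eq_zero_iff.mp h2
      rw [hpy, SimpleGraph.edist_self, add_zero]
    · have htop' : X.edist ↑y x ≠ ⊤ := by rwa [SimpleGraph.edist_comm]
      obtain ⟨W, hW⟩ := SimpleGraph.exists_walk_of_edist_ne_top htop'
      obtain ⟨haH, z, hzH, hzG, W₂, hle⟩ := crossing (G := H) (H := G)
        (fun u v huv => (hadj u v huv).symm) W hyG hx
      have hyz : H.coe.edist y ⟨z, hzH⟩ = H.coe.edist y p + H.coe.edist p ⟨z, hzH⟩ :=
        hp ⟨z, hzH⟩ hzG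
      calc X.edist x ↑p + H.coe.edist p y
          = H.coe.edist y p + X.edist ↑p x := by
            rw [SimpleGraph.edist_comm (u := x), SimpleGraph.edist_comm (G := H.coe)]; ring
        _ ≤ H.coe.edist y p + (X.edist ↑p z + X.edist z x) :=
            add_le_add_right SimpleGraph.edist_triangle _
        _ ≤ H.coe.edist y p + (H.coe.edist p ⟨z, hzH⟩ + X.edist z x) :=
            add_le_add_right (add_le_add_left (edist_X_le H p ⟨z, hzH⟩) _) _
        _ = H.coe.edist y ⟨z, hzH⟩ + X.edist z x := by rw [hyz]; ring
        _ ≤ H.coe.edist y ⟨z, hzH⟩ + W₂.length :=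
            add_le_add_right (SimpleGraph.edist_le W₂) _
        _ ≤ W.length := hle
        _ = X.edist x ↑y := by rw [hW, SimpleGraph.edist_comm]

lemma no_proj_top (hadj : ∀ u v : V, X.Adj u v → G.Adj u v ∨ H.Adj u v)
    {x : V} (hx : x ∈ G.verts) (y : ↥H.verts)
    (hno : ¬ ∃ u : ↥H.verts, (u : V) ∈ G.verts ∧ H.coe.edist y u ≠ ⊤) :
    X.edist x ↑y = ⊤ := by
  by_contra hne
  by_cases hyG : (y : V) ∈ G.verts
  · exact hno ⟨y, hyG, by simp [SimpleGraph.edist_self]⟩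
  · have htop' : X.edist ↑y x ≠ ⊤ := by rwa [SimpleGraph.edist_comm]
    obtain ⟨W, hW⟩ := SimpleGraph.exists_walk_of_edist_ne_top htop'
    obtain ⟨haH, z, hzH, hzG, W₂, hle⟩ :=
      crossing (G := H) (H := G) (fun u v huv => (hadj u v huv).symm) W hyG hx
    refine hno ⟨⟨z, hzH⟩, hzG, ?_⟩
    have h1 : H.coe.edist y ⟨z, hzH⟩ ≤ (W.length : ℕ∞) :=
      le_trans le_self_add hle
    intro hcon
    rw [hcon] at h1
    exact (lt_irrefl _ (lt_of_le_of_lt h1 (by exact_mod_cast lt_top_iff_ne_top.mpr (ENat.coe_ne_top _)))).elim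

end Main

section LinAlg

open scoped Classical Matrix
open Matrix

variable {V : Type*} [Fintype V] [DecidableEq V]

lemma magMatrix_mulVec_weighting (S : SimpleGraph V) :
    magMatrix S *ᵥ weighting S = fun _ => 1 := by
  have hdet : IsUnit (magMatrix S).det := isUnit_iff_ne_zero.mpr (magMatrix_det_ne_zero S)
  have hw : weighting S = (magMatrix S)⁻¹ *ᵥ (fun _ => 1) := by
    funext x; simp [weighting, Matrix.mulVec, dotProduct]
  rw [hw, Matrix.mulVec_mulVec, Matrix.mul_nonsing_inv _ hdet, Matrix.one_mulVec]

lemma magnitude_eq_sum_weighting (S : SimpleGraph V) :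
    magnitude S = ∑ x, weighting S x := rfl

lemma magnitude_eq_sum_of (S : SimpleGraph V) (w : V → RatFunc ℚ)
    (hw : magMatrix S *ᵥ w = fun _ => 1) : magnitude S = ∑ x, w x := by
  have hdet : IsUnit (magMatrix S).det := isUnit_iff_ne_zero.mpr (magMatrix_det_ne_zero S)
  have hw2 : w = weighting S := by
    calc w = (magMatrix S)⁻¹ *ᵥ (magMatrix S *ᵥ w) := by
            rw [Matrix.mulVec_mulVec, Matrix.nonsing_inv_mul _ hdet, Matrix.one_mulVec]
      _ = (magMatrix S)⁻¹ *ᵥ (magMatrix S *ᵥ weighting S) := by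
            rw [hw, magMatrix_mulVec_weighting]
      _ = weighting S := by
            rw [Matrix.mulVec_mulVec, Matrix.nonsing_inv_mul _ hdet, Matrix.one_mulVec]
  rw [magnitude_eq_sum_weighting, hw2]

lemma vecMul_magMatrix_inv (S : SimpleGraph V) (a : V → RatFunc ℚ) :
    (a ᵥ* (magMatrix S)⁻¹) ᵥ* magMatrix S = a := by
  have hdet : IsUnit (magMatrix S).det := isUnit_iff_ne_zero.mpr (magMatrix_det_ne_zero S)
  rw [Matrix.vecMul_vecMul, Matrix.nonsing_inv_mul _ hdet, Matrix.vecMul_one]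

end LinAlg

section Sums

open scoped Classical

lemma sum_dite' {α : Type*} [Fintype α] {K : Type*} [AddCommMonoid K] (S : Set α)
    (F : ∀ a : α, a ∈ S → K) :
    (∑ a : α, if h : a ∈ S then F a h else 0) = ∑ a : ↥S, F ↑a a.2 := by
  classical
  have h1 : (∑ a : α, if h : a ∈ S then F a h else 0)
      = ∑ a ∈ S.toFinset, (if h : a ∈ S then F a h else 0) :=
    (Finset.sum_subset (Finset.subset_univ _)
      (fun x _ hx => dif_neg (by simpa using hx))).symm
  rw [h1, Finset.sum_subtype (p := (· ∈ S)) S.toFinset (by simp) (fun a => if h : a ∈ S then F a h else 0)]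
  exact Finset.sum_congr rfl (fun a _ => dif_pos a.2)

end Sums

set_option maxHeartbeats 1000000 in
open scoped Classical Matrix in
theorem magnitude_union'
    {V : Type*} [Fintype V] [DecidableEq V] (X : SimpleGraph V)
    (G H : X.Subgraph) (hGH : G ⊔ H = ⊤)
    (hconv : ConvexIn (G ⊓ H))
    (hproj : ∀ x : H.verts,
      (∃ u : H.verts, (u : V) ∈ G.verts ∧ H.coe.edist x u ≠ ⊤) →
      ∃ p : H.verts, (p : V) ∈ G.verts ∧
        ∀ u : H.verts, (u : V) ∈ G.verts →
          H.coe.edist x u = H.coe.edist x p + H.coe.edist p u) :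
    magnitude X = magnitude G.coe + magnitude H.coe - magnitude (G ⊓ H).coe := by
  have hadj : ∀ u v : V, X.Adj u v → G.Adj u v ∨ H.Adj u v := by
    intro u v huv
    have h2 : (G ⊔ H).Adj u v := by rw [hGH]; exact huv
    exact h2
  have hcH : ∀ u v : ↥H.verts, H.coe.edist u v = X.edist ↑u ↑v := convH hadj hconv
  have hcG : ∀ u v : ↥G.verts, G.coe.edist u v = X.edist ↑u ↑v := convG hadj hconv
  set wG := weighting G.coe with hwG
  set wH := weighting H.coe with hwH
  set wI := weighting (G ⊓ H).coe with hwI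
  set w : V → RatFunc ℚ := fun v =>
    (if h : v ∈ G.verts then wG ⟨v, h⟩ else 0) +
    ((if h : v ∈ H.verts then wH ⟨v, h⟩ else 0) -
     (if h : v ∈ (G ⊓ H).verts then wI ⟨v, h⟩ else 0)) with hw
  have key : magMatrix X *ᵥ w = fun _ => 1 := by
    funext x
    have hexp : (magMatrix X *ᵥ w) x =
        (∑ g : ↥G.verts, qExp (X.edist x ↑g) * wG g) +
        ((∑ y : ↥H.verts, qExp (X.edist x ↑y) * wH y) -
         (∑ z : ↥(G ⊓ H).verts, qExp (X.edist x ↑z) * wI z)) := by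
      have hsum : ∀ (S : Set V) (f : ↥S → RatFunc ℚ),
          (∑ v : V, qExp (X.edist x v) * (if h : v ∈ S then f ⟨v, h⟩ else 0))
            = ∑ s : ↥S, qExp (X.edist x ↑s) * f s := by
        intro S f
        rw [← sum_dite' S (fun v h => qExp (X.edist x v) * f ⟨v, h⟩)]
        apply Finset.sum_congr rfl
        intro v _
        split
        · rfl
        · rw [mul_zero]
      calc (magMatrix X *ᵥ w) x = ∑ v : V, qExp (X.edist x v) * w v := rfl
        _ = ∑ v : V, (qExp (X.edist x v) * (if h : v ∈ G.verts then wG ⟨v, h⟩ else 0) +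
             (qExp (X.edist x v) * (if h : v ∈ H.verts then wH ⟨v, h⟩ else 0) -
              qExp (X.edist x v) * (if h : v ∈ (G ⊓ H).verts then wI ⟨v, h⟩ else 0))) := by
            apply Finset.sum_congr rfl; intro v _; rw [hw]; ring
        _ = _ := by
            rw [Finset.sum_add_distrib, Finset.sum_sub_distrib,
              hsum G.verts, hsum H.verts, hsum (G ⊓ H).verts]
    rw [hexp]
    have hxGH : x ∈ G.verts ∨ x ∈ H.verts := by
      have : x ∈ (G ⊔ H).verts := by rw [hGH, SimpleGraph.Subgraph.verts_top]; trivial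
      rwa [SimpleGraph.Subgraph.verts_sup] at this
    by_cases hx : x ∈ G.verts
    · -- case 1 : x ∈ G.verts
      have hTG : (∑ g : ↥G.verts, qExp (X.edist x ↑g) * wG g) = 1 := by
        have : ∀ g : ↥G.verts, qExp (X.edist x ↑g) = magMatrix G.coe ⟨x, hx⟩ g := by
          intro g
          have h0 := (hcG ⟨x, hx⟩ g).symm
          rw [show X.edist x ↑g = G.coe.edist ⟨x, hx⟩ g from h0]; rfl
        calc (∑ g : ↥G.verts, qExp (X.edist x ↑g) * wG g)
            = ∑ g : ↥G.verts, magMatrix G.coe ⟨x, hx⟩ g * wG g := by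
              apply Finset.sum_congr rfl; intro g _; rw [this g]
          _ = (magMatrix G.coe *ᵥ wG) ⟨x, hx⟩ := rfl
          _ = 1 := by rw [hwG, magMatrix_mulVec_weighting]
      rw [hTG]
      -- now show TH = TI
      set a : ↥(G ⊓ H).verts → RatFunc ℚ := fun z => qExp (X.edist x ↑z) with ha
      set u : ↥(G ⊓ H).verts → RatFunc ℚ := a ᵥ* (magMatrix (G ⊓ H).coe)⁻¹ with hu
      have hua : u ᵥ* magMatrix (G ⊓ H).coe = a := vecMul_magMatrix_inv _ a
      set u' : ↥H.verts → RatFunc ℚ :=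
        fun y => if h : (y : V) ∈ G.verts then u ⟨↑y, ⟨h, y.2⟩⟩ else 0 with hu'
      have key2 : ∀ y : ↥H.verts, (u' ᵥ* magMatrix H.coe) y = qExp (X.edist x ↑y) := by
        intro y
        have hlhs : (u' ᵥ* magMatrix H.coe) y
            = ∑ z : ↥H.verts, u' z * qExp (H.coe.edist z y) := rfl
        rw [hlhs]
        by_cases hex : ∃ u0 : ↥H.verts, (u0 : V) ∈ G.verts ∧ H.coe.edist y u0 ≠ ⊤
        · obtain ⟨p, hpG, hpeq⟩ := hproj y hex
          have hform : X.edist x ↑y = X.edist x ↑p + H.coe.edist p y :=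
            dist_split hadj hx y p hpG hpeq
          set p' : ↥(G ⊓ H).verts := ⟨↑p, ⟨hpG, p.2⟩⟩ with hp'
          have step1 : (∑ z : ↥H.verts, u' z * qExp (H.coe.edist z y))
              = ∑ z : ↥(G ⊓ H).verts, u z *
                  qExp (H.coe.edist ⟨↑z, z.2.2⟩ y) := by
            calc (∑ z : ↥H.verts, u' z * qExp (H.coe.edist z y))
                = ∑ v : V, (if h : v ∈ H.verts then
                    u' ⟨v, h⟩ * qExp (H.coe.edist ⟨v, h⟩ y) else 0) :=
                  (sum_dite' H.verts
                    (fun v h => u' ⟨v, h⟩ * qExp (H.coe.edist ⟨v, h⟩ y))).symm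
              _ = ∑ v : V, (if h : v ∈ (G ⊓ H).verts then
                    u ⟨v, h⟩ * qExp (H.coe.edist ⟨v, h.2⟩ y) else 0) := by
                  apply Finset.sum_congr rfl
                  intro v _
                  by_cases h1 : v ∈ H.verts
                  · by_cases h2 : v ∈ G.verts
                    · rw [dif_pos h1, dif_pos (mem_inf_verts h2 h1)]
                      simp only [hu']
                      rw [dif_pos h2]
                    · rw [dif_pos h1, dif_neg (fun hc : v ∈ (G ⊓ H).verts => h2 hc.1)]
                      simp only [hu']
                      rw [dif_neg h2, zero_mul]
                  · rw [dif_neg h1, dif_neg (fun hc : v ∈ (G ⊓ H).verts => h1 hc.2)]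
              _ = ∑ z : ↥(G ⊓ H).verts, u z * qExp (H.coe.edist ⟨↑z, z.2.2⟩ y) :=
                  sum_dite' (G ⊓ H).verts
                    (fun v h => u ⟨v, h⟩ * qExp (H.coe.edist ⟨v, h.2⟩ y))
          rw [step1]
          have step2 : ∀ z : ↥(G ⊓ H).verts,
              u z * qExp (H.coe.edist ⟨↑z, z.2.2⟩ y)
              = (u z * magMatrix (G ⊓ H).coe z p') * qExp (H.coe.edist y p) := by
            intro z
            have h1 : H.coe.edist (⟨↑z, z.2.2⟩ : ↥H.verts) y
                = H.coe.edist y p + H.coe.edist p ⟨↑z, z.2.2⟩ := by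
              rw [SimpleGraph.edist_comm]; exact hpeq ⟨↑z, z.2.2⟩ z.2.1
            have h2 : H.coe.edist p ⟨↑z, z.2.2⟩ = (G ⊓ H).coe.edist z p' := by
              rw [hcH, hconv ↑z ↑p z.2 ⟨hpG, p.2⟩, SimpleGraph.edist_comm]
            rw [h1, qExp_add, h2]
            show u z * (qExp (H.coe.edist y p) * magMatrix (G ⊓ H).coe z p') = _
            ring
          rw [Finset.sum_congr rfl (fun z _ => step2 z), ← Finset.sum_mul]
          have step3 : (∑ z : ↥(G ⊓ H).verts, u z * magMatrix (G ⊓ H).coe z p') = a p' := by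
            rw [← hua]; rfl
          rw [step3, ha]
          show qExp (X.edist x ↑p) * qExp (H.coe.edist y p) = qExp (X.edist x ↑y)
          rw [hform, qExp_add, SimpleGraph.edist_comm (G := H.coe)]
        · -- no projection: everything is ⊤
          have hrhs : qExp (X.edist x ↑y) = 0 := by
            rw [no_proj_top hadj hx y hex, qExp_top]
          rw [hrhs]
          apply Finset.sum_eq_zero
          intro z _
          simp only [hu']
          by_cases hzG : (z : V) ∈ G.verts
          · have hdzy : H.coe.edist z y = ⊤ := by
              by_contra hne
              exact hex ⟨z, hzG, by rwa [SimpleGraph.edist_comm]⟩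
            rw [dif_pos hzG, hdzy, qExp_top, mul_zero]
          · rw [dif_neg hzG, zero_mul]
      have hTH : (∑ y : ↥H.verts, qExp (X.edist x ↑y) * wH y)
          = ∑ z : ↥(G ⊓ H).verts, u z := by
        calc (∑ y : ↥H.verts, qExp (X.edist x ↑y) * wH y)
            = ∑ y : ↥H.verts, (u' ᵥ* magMatrix H.coe) y * wH y :=
              Finset.sum_congr rfl (fun y _ => by rw [key2 y])
          _ = (u' ᵥ* magMatrix H.coe) ⬝ᵥ wH := rfl
          _ = u' ⬝ᵥ (magMatrix H.coe *ᵥ wH) := (Matrix.dotProduct_mulVec u' _ wH).symm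
          _ = u' ⬝ᵥ (fun _ => 1) := by rw [hwH, magMatrix_mulVec_weighting]
          _ = ∑ y : ↥H.verts, u' y := by simp [dotProduct]
          _ = ∑ z : ↥(G ⊓ H).verts, u z := by
              calc (∑ y : ↥H.verts, u' y)
                  = ∑ v : V, (if h : v ∈ H.verts then u' ⟨v, h⟩ else 0) :=
                    (sum_dite' H.verts (fun v h => u' ⟨v, h⟩)).symm
                _ = ∑ v : V, (if h : v ∈ (G ⊓ H).verts then u ⟨v, h⟩ else 0) := by
                    apply Finset.sum_congr rfl
                    intro v _
                    by_cases h1 : v ∈ H.verts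
                    · by_cases h2 : v ∈ G.verts
                      · rw [dif_pos h1, dif_pos (mem_inf_verts h2 h1)]
                        simp only [hu']
                        rw [dif_pos h2]
                      · rw [dif_pos h1, dif_neg (fun hc : v ∈ (G ⊓ H).verts => h2 hc.1)]
                        simp only [hu']
                        rw [dif_neg h2]
                    · rw [dif_neg h1, dif_neg (fun hc : v ∈ (G ⊓ H).verts => h1 hc.2)]
                _ = ∑ z : ↥(G ⊓ H).verts, u z := sum_dite' (G ⊓ H).verts (fun v h => u ⟨v, h⟩)
      have hTI : (∑ z : ↥(G ⊓ H).verts, qExp (X.edist x ↑z) * wI z)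
          = ∑ z : ↥(G ⊓ H).verts, u z := by
        calc (∑ z : ↥(G ⊓ H).verts, qExp (X.edist x ↑z) * wI z)
            = ∑ z : ↥(G ⊓ H).verts, (u ᵥ* magMatrix (G ⊓ H).coe) z * wI z := by
              rw [hua]
          _ = (u ᵥ* magMatrix (G ⊓ H).coe) ⬝ᵥ wI := rfl
          _ = u ⬝ᵥ (magMatrix (G ⊓ H).coe *ᵥ wI) := (Matrix.dotProduct_mulVec u _ wI).symm
          _ = u ⬝ᵥ (fun _ => 1) := by rw [hwI, magMatrix_mulVec_weighting]
          _ = ∑ z : ↥(G ⊓ H).verts, u z := by simp [dotProduct]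
      rw [hTH, hTI]
      ring
    · -- case 2 : x ∈ H.verts, x ∉ G.verts
      have hxH : x ∈ H.verts := hxGH.resolve_left hx
      have hTH : (∑ y : ↥H.verts, qExp (X.edist x ↑y) * wH y) = 1 := by
        have : ∀ y : ↥H.verts, qExp (X.edist x ↑y) = magMatrix H.coe ⟨x, hxH⟩ y := by
          intro y
          have h0 := (hcH ⟨x, hxH⟩ y).symm
          rw [show X.edist x ↑y = H.coe.edist ⟨x, hxH⟩ y from h0]; rfl
        calc (∑ y : ↥H.verts, qExp (X.edist x ↑y) * wH y)
            = ∑ y : ↥H.verts, magMatrix H.coe ⟨x, hxH⟩ y * wH y := by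
              apply Finset.sum_congr rfl; intro y _; rw [this y]
          _ = (magMatrix H.coe *ᵥ wH) ⟨x, hxH⟩ := rfl
          _ = 1 := by rw [hwH, magMatrix_mulVec_weighting]
      by_cases hex : ∃ u0 : ↥H.verts, (u0 : V) ∈ G.verts ∧ H.coe.edist ⟨x, hxH⟩ u0 ≠ ⊤
      · obtain ⟨p, hpG, hpeq⟩ := hproj ⟨x, hxH⟩ hex
        set c := qExp (H.coe.edist p ⟨x, hxH⟩) with hc
        have hTG : (∑ g : ↥G.verts, qExp (X.edist x ↑g) * wG g) = c := by
          have hdist : ∀ g : ↥G.verts, qExp (X.edist x ↑g)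
              = magMatrix G.coe ⟨↑p, hpG⟩ g * c := by
            intro g
            have h1 : X.edist x ↑g = X.edist ↑g ↑p + H.coe.edist p ⟨x, hxH⟩ := by
              rw [SimpleGraph.edist_comm]
              exact dist_split hadj g.2 ⟨x, hxH⟩ p hpG hpeq
            have h2 : X.edist ↑g ↑p = G.coe.edist ⟨↑p, hpG⟩ g := by
              rw [hcG, SimpleGraph.edist_comm]
            rw [h1, qExp_add, h2]; rfl
          calc (∑ g : ↥G.verts, qExp (X.edist x ↑g) * wG g)
              = (∑ g : ↥G.verts, magMatrix G.coe ⟨↑p, hpG⟩ g * wG g) * c := by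
                rw [Finset.sum_mul]
                apply Finset.sum_congr rfl; intro g _; rw [hdist g]; ring
            _ = (magMatrix G.coe *ᵥ wG) ⟨↑p, hpG⟩ * c := rfl
            _ = c := by rw [hwG, magMatrix_mulVec_weighting]; simp
        have hTI : (∑ z : ↥(G ⊓ H).verts, qExp (X.edist x ↑z) * wI z) = c := by
          have hdist : ∀ z : ↥(G ⊓ H).verts, qExp (X.edist x ↑z)
              = magMatrix (G ⊓ H).coe ⟨↑p, ⟨hpG, p.2⟩⟩ z * c := by
            intro z
            have h1 : X.edist x ↑z = X.edist ↑z ↑p + H.coe.edist p ⟨x, hxH⟩ := by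
              rw [SimpleGraph.edist_comm]
              exact dist_split hadj z.2.1 ⟨x, hxH⟩ p hpG hpeq
            have h2 : X.edist ↑z ↑p = (G ⊓ H).coe.edist ⟨↑p, ⟨hpG, p.2⟩⟩ z := by
              rw [hconv ↑p ↑z ⟨hpG, p.2⟩ z.2, SimpleGraph.edist_comm]
            rw [h1, qExp_add, h2]; rfl
          calc (∑ z : ↥(G ⊓ H).verts, qExp (X.edist x ↑z) * wI z)
              = (∑ z : ↥(G ⊓ H).verts,
                  magMatrix (G ⊓ H).coe ⟨↑p, ⟨hpG, p.2⟩⟩ z * wI z) * c := by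
                rw [Finset.sum_mul]
                apply Finset.sum_congr rfl; intro z _; rw [hdist z]; ring
            _ = (magMatrix (G ⊓ H).coe *ᵥ wI) ⟨↑p, ⟨hpG, p.2⟩⟩ * c := rfl
            _ = c := by rw [hwI, magMatrix_mulVec_weighting]; simp
        rw [hTG, hTH, hTI]
        ring
      · have hTG : (∑ g : ↥G.verts, qExp (X.edist x ↑g) * wG g) = 0 := by
          apply Finset.sum_eq_zero
          intro g _
          rw [show X.edist x ↑g = ⊤ from by
            rw [SimpleGraph.edist_comm]
            exact no_proj_top hadj g.2 ⟨x, hxH⟩ hex, qExp_top, zero_mul]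
        have hTI : (∑ z : ↥(G ⊓ H).verts, qExp (X.edist x ↑z) * wI z) = 0 := by
          apply Finset.sum_eq_zero
          intro z _
          rw [show X.edist x ↑z = ⊤ from by
            rw [SimpleGraph.edist_comm]
            exact no_proj_top hadj z.2.1 ⟨x, hxH⟩ hex, qExp_top, zero_mul]
        rw [hTG, hTH, hTI]
        ring
  have h1 : magnitude X = ∑ v, w v := magnitude_eq_sum_of X w key
  rw [h1]
  have hsplit : (∑ v, w v) = (∑ g : ↥G.verts, wG g) +
      ((∑ y : ↥H.verts, wH y) - (∑ z : ↥(G ⊓ H).verts, wI z)) := by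
    rw [hw]
    rw [Finset.sum_add_distrib, Finset.sum_sub_distrib,
      sum_dite' G.verts (fun v h => wG ⟨v, h⟩),
      sum_dite' H.verts (fun v h => wH ⟨v, h⟩),
      sum_dite' (G ⊓ H).verts (fun v h => wI ⟨v, h⟩)]
  rw [hsplit, magnitude_eq_sum_weighting G.coe, magnitude_eq_sum_weighting H.coe,
    magnitude_eq_sum_weighting (G ⊓ H).coe]
  rw [hwG, hwH, hwI]
  ring


open scoped Classical in
/-- Inclusion-exclusion for magnitude: if `G ∪ H = X`, `G ∩ H` is convex in `X` and `H`
projects to `G ∩ H`, then `|X| = |G| + |H| - |G ∩ H|`. -/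
theorem magnitude_union
    {V : Type*} [Fintype V] [DecidableEq V] (X : SimpleGraph V)
    (G H : X.Subgraph) (hGH : G ⊔ H = ⊤)
    (hconv : ConvexIn (G ⊓ H))
    (hproj : ∀ x : H.verts,
      (∃ u : H.verts, (u : V) ∈ G.verts ∧ H.coe.edist x u ≠ ⊤) →
      ∃ p : H.verts, (p : V) ∈ G.verts ∧
        ∀ u : H.verts, (u : V) ∈ G.verts →
          H.coe.edist x u = H.coe.edist x p + H.coe.edist p u) :
    magnitude X = magnitude G.coe + magnitude H.coe - magnitude (G ⊓ H).coe := by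
  exact magnitude_union' X G H hGH hconv hproj
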